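/- arXiv:1409.2791 — 2 statements merged into one kernel-verified Lean document; each statement's English description precedes it below -/
import Mathlib

section
/- Let g ∈ VMO_ℝ. Then the essential range of g, namely R_g = {λ ∈ ℝ : for every ε > 0 the set {e^{it} ∈ 𝕋 : |g(e^{it}) − λ| < ε} has positive Lebesgue measure}, is a connected subset of ℝ. -/
open MeasureTheory Complex Real Set

noncomputable section

instance : Fact (0 < 2 * π) := ⟨by positivity⟩

/-- The circle `ℝ / 2πℤ`. -/
abbrev 𝕋c : Type := AddCircle (2 * π)

/-- Normalized Haar (Lebesgue) measure on the circle, of total mass 1. -/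
abbrev μT : Measure 𝕋c := AddCircle.haarAddCircle

/-- `f` is (a representative of) an element of `L^∞(𝕋)`:
it is a.e. strongly measurable and essentially bounded. -/
def IsEssBdd (f : 𝕋c → ℂ) : Prop :=
  AEStronglyMeasurable f μT ∧ ∃ C : ℝ, ∀ᵐ t ∂μT, ‖f t‖ ≤ C

/-- `f` is (essentially) real-valued. -/
def RealValued (f : 𝕋c → ℂ) : Prop := ∀ᵐ t ∂μT, (f t).im = 0

/-- The Hardy space `H^∞(𝕋)`: essentially bounded functions whose negative Fourier
coefficients vanish. -/
def MemHinf (f : 𝕋c → ℂ) : Prop :=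
  IsEssBdd f ∧ ∀ n : ℤ, n < 0 → fourierCoeff f n = 0

/-- `f` is a.e. equal to a continuous function on the circle. -/
def MemCT (f : 𝕋c → ℂ) : Prop := ∃ c : C(𝕋c, ℂ), f =ᵐ[μT] ⇑c

/-- The space `H^∞ + C(𝕋)`. -/
def MemHinfC (f : 𝕋c → ℂ) : Prop :=
  ∃ h c : 𝕋c → ℂ, MemHinf h ∧ MemCT c ∧ f =ᵐ[μT] h + c

/-- `f` is invertible in `H^∞ + C(𝕋)`. -/
def MemInvHinfC (f : 𝕋c → ℂ) : Prop :=
  MemHinfC f ∧ ∃ g : 𝕋c → ℂ, MemHinfC g ∧ f * g =ᵐ[μT] 1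

/-- The quasicontinuous functions `QC = (H^∞+C) ∩ conj(H^∞+C)`. -/
def MemQC (f : 𝕋c → ℂ) : Prop :=
  MemHinfC f ∧ MemHinfC (fun t => starRingEnd ℂ (f t))

/-- Real-valued quasicontinuous functions, `QC_ℝ`. -/
def MemQCR (f : 𝕋c → ℂ) : Prop := MemQC f ∧ RealValued f

/-- `𝓘`: invertible elements of `QC`. -/
def MemInvQC (f : 𝕋c → ℂ) : Prop :=
  MemQC f ∧ ∃ g : 𝕋c → ℂ, MemQC g ∧ f * g =ᵐ[μT] 1

/-- The average of `f` over the arc corresponding to the interval `[a,b]`. -/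
def arcAvg (f : 𝕋c → ℂ) (a b : ℝ) : ℂ := (b - a)⁻¹ • ∫ t in a..b, f (t : 𝕋c)

/-- The (quadratic) mean oscillation of `f` over the arc corresponding to `[a,b]`. -/
def meanOsc (f : 𝕋c → ℂ) (a b : ℝ) : ℝ :=
  (b - a)⁻¹ * ∫ t in a..b, ‖f (t : 𝕋c) - arcAvg f a b‖ ^ 2

/-- `f ∈ VMO`: `f ∈ L²(𝕋)`, the mean oscillation over all subarcs is bounded, and it
tends to `0` as the length of the arc tends to `0`. -/
def MemVMO (f : 𝕋c → ℂ) : Prop :=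
  MemLp f 2 μT ∧
  (∃ C : ℝ, ∀ a b : ℝ, a < b → b - a ≤ 2 * π → meanOsc f a b ≤ C) ∧
  (∀ ε > 0, ∃ δ > 0, ∀ a b : ℝ, a < b → b - a < δ → meanOsc f a b < ε)

/-- Real-valued elements of `VMO`, `VMO_ℝ`. -/
def MemVMOR (f : 𝕋c → ℂ) : Prop := MemVMO f ∧ RealValued f

/-- `g` is the Hilbert transform of `f`: `g ∈ L²` and the Fourier coefficients of `g`
are `-i·sgn(n)` times those of `f`. -/
def IsHilbertTransform (f g : 𝕋c → ℂ) : Prop :=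
  MemLp g 2 μT ∧ ∀ n : ℤ, fourierCoeff g n = -Complex.I * (Int.sign n : ℂ) * fourierCoeff f n



/-- The essential range of `g` (for real values `λ`). -/
def essRange (g : 𝕋c → ℂ) : Set ℝ :=
  {lam : ℝ | ∀ ε > 0, 0 < μT {t : 𝕋c | ‖g t - (lam : ℂ)‖ < ε}}

/-!
Suppose `l₁ < c < l₂` with `l₁, l₂` in the essential range but `c` not. Then `g` a.e. avoids a
band `(c - ε, c + ε)`, while both `{g ≤ c - ε}` and `{g ≥ c + ε}` have positive measure. Fix a
radius `r` so small that every arc of length `2r` has mean oscillation `< ε²/8`. The average of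
`g` over the arc centred at `s` depends continuously on `s`, and it can never equal `c`: on an arc
whose average is `c`, Chebyshev's inequality would force oscillation `≥ ε²/4`. So all these averages
lie on one side of `c`, say below. At a Lebesgue density point of `{g ≥ c + ε}` an arc of length `2r`
is three quarters filled by points at distance `≥ ε` from its average, which gives oscillation
`≥ 3ε²/4`, a contradiction.
-/

open Filter Topology

namespace AddCircle

variable {T : ℝ} [Fact (0 < T)]

lemma volume_absolutelyContinuous_haarAddCircle :
    (volume : Measure (AddCircle T)) ≪ haarAddCircle := by
  rw [volume_eq_smul_haarAddCircle]
  exact Measure.smul_absolutelyContinuous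

lemma haarAddCircle_absolutelyContinuous_volume :
    (haarAddCircle : Measure (AddCircle T)) ≪ volume := by
  rw [volume_eq_smul_haarAddCircle]
  exact Measure.absolutelyContinuous_smul (by simp [(Fact.out : 0 < T)])

lemma map_coe_volume_absolutelyContinuous :
    (volume : Measure ℝ).map ((↑) : ℝ → AddCircle T) ≪ haarAddCircle := by
  have hF := isAddFundamentalDomain_Ioc' (Fact.out : 0 < T) 0
  refine hF.absolutelyContinuous_map.trans ?_
  rw [(AddCircle.measurePreserving_mk T 0).map_eq]
  exact volume_absolutelyContinuous_haarAddCircle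

lemma ae_coe_of_ae {P : AddCircle T → Prop} (h : ∀ᵐ t ∂haarAddCircle, P t) :
    ∀ᵐ x : ℝ, P x :=
  ae_of_ae_map AddCircle.measurable_mk'.aemeasurable (map_coe_volume_absolutelyContinuous h)

lemma volume_coe_preimage_pos {S : Set (AddCircle T)} (hS : NullMeasurableSet S haarAddCircle)
    (h : 0 < haarAddCircle S) : 0 < volume (((↑) : ℝ → AddCircle T) ⁻¹' S) := by
  calc 0 < volume S := haarAddCircle_absolutelyContinuous_volume.pos_mono h
    _ = volume.restrict (Ioc 0 (0 + T)) (((↑) : ℝ → AddCircle T) ⁻¹' S) :=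
      ((AddCircle.measurePreserving_mk T 0).measure_preimage
        (hS.mono_ac volume_absolutelyContinuous_haarAddCircle)).symm
    _ ≤ volume (((↑) : ℝ → AddCircle T) ⁻¹' S) := Measure.restrict_apply_le _ _

lemma intervalIntegrable_comp_coe {E : Type*} [NormedAddCommGroup E] {f : AddCircle T → E}
    (hf : Integrable f haarAddCircle) (a b : ℝ) :
    IntervalIntegrable (fun x : ℝ => f x) volume a b := by
  have hT : 0 < T := Fact.out
  have hf' : Integrable f volume := by
    rw [volume_eq_smul_haarAddCircle]
    exact hf.smul_measure ENNReal.ofReal_ne_top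
  have hperiod : Function.Periodic (fun x : ℝ => f x) T := fun x => by simp
  refine hperiod.intervalIntegrable (t := 0) hT.ne' ?_ a b
  rw [intervalIntegrable_iff_integrableOn_Ioc_of_le (by linarith)]
  exact ((AddCircle.measurePreserving_mk T 0).integrable_comp hf'.aestronglyMeasurable).2 hf'

end AddCircle

lemma Continuous.forall_lt_or_forall_gt_of_forall_ne {X : Type*} [TopologicalSpace X]
    [PreconnectedSpace X] {F : X → ℝ} (hF : Continuous F) {c : ℝ} (hc : ∀ s, F s ≠ c) :
    (∀ s, F s < c) ∨ (∀ s, c < F s) := by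
  by_contra! h
  obtain ⟨⟨s₁, h₁⟩, s₂, h₂⟩ := h
  obtain ⟨s, hs⟩ := intermediate_value_univ s₂ s₁ hF ⟨h₂, h₁⟩
  exact hc s hs

lemma Real.exists_eventually_mul_le_measureReal_inter_Ioc {S : Set ℝ} (hS : 0 < volume S)
    {θ : ℝ} (hθ : θ < 1) :
    ∃ x, ∀ᶠ r in 𝓝[>] 0, θ * (2 * r) ≤ volume.real (S ∩ Ioc (x - r) (x + r)) := by
  have : (ae (volume.restrict S)).NeBot := ae_restrict_neBot.2 hS.ne'
  obtain ⟨x, hx⟩ := (Besicovitch.ae_tendsto_measure_inter_div (volume : Measure ℝ) S).exists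
  refine ⟨x, ?_⟩
  filter_upwards [self_mem_nhdsWithin,
    hx.eventually (eventually_gt_nhds (ENNReal.ofReal_lt_one.2 hθ))] with r (hr : 0 < r) hratio
  have hIoc : volume (S ∩ Metric.closedBall x r) = volume (S ∩ Ioc (x - r) (x + r)) := by
    rw [Real.closedBall_eq_Icc]
    exact measure_congr ((ae_eq_refl S).inter Ioc_ae_eq_Icc).symm
  rw [Real.volume_closedBall, hIoc,
    ENNReal.lt_div_iff_mul_lt (by simp [hr]) (.inl ENNReal.ofReal_ne_top),
    ← ENNReal.ofReal_mul' (by positivity)] at hratio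
  exact (ENNReal.ofReal_le_iff_le_toReal (measure_ne_top_of_subset inter_subset_right
    (by simp))).1 hratio.le

lemma Complex.abs_re_sub_re_le_norm_sub (z w : ℂ) : |z.re - w.re| ≤ ‖z - w‖ := by
  simpa using abs_re_le_norm (z - w)

lemma Complex.norm_sub_ofReal_of_im_eq_zero {z : ℂ} (hz : z.im = 0) (x : ℝ) :
    ‖z - x‖ = |z.re - x| := by
  rw [← Complex.re_add_im z, hz]
  simp [← Complex.ofReal_sub, Complex.norm_real]

lemma MeasureTheory.AEStronglyMeasurable.aemeasurable_re {α : Type*} [MeasurableSpace α]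
    {μ : Measure α} {f : α → ℂ} (hf : AEStronglyMeasurable f μ) :
    AEMeasurable (fun t => (f t).re) μ :=
  Complex.measurable_re.comp_aemeasurable hf.aemeasurable

section Oscillation

variable {g : 𝕋c → ℂ}

lemma continuous_arcAvg_sub_add (hg : Integrable g μT) (r : ℝ) :
    Continuous fun s : ℝ => arcAvg g (s - r) (s + r) := by
  have hint := AddCircle.intervalIntegrable_comp_coe hg
  have hprim : Continuous fun u : ℝ => ∫ x in (0 : ℝ)..u, g x :=
    intervalIntegral.continuous_primitive hint 0
  have hsplit : ∀ s : ℝ, arcAvg g (s - r) (s + r)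
      = (2 * r)⁻¹ • ((∫ x in (0 : ℝ)..(s + r), g x) - ∫ x in (0 : ℝ)..(s - r), g x) := by
    intro s
    rw [arcAvg, intervalIntegral.integral_interval_sub_left (hint _ _) (hint _ _)]
    ring_nf
  simp only [hsplit]
  fun_prop

lemma mul_sq_le_meanOsc (hg : MemLp g 2 μT) {a b : ℝ} (hab : a < b) {S : Set ℝ} {η θ : ℝ}
    (hS : ∀ y ∈ S, η ≤ ‖g y - arcAvg g a b‖) (hη : 0 ≤ η)
    (hdens : θ * (b - a) ≤ volume.real (S ∩ Ioc a b)) : θ * η ^ 2 ≤ meanOsc g a b := by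
  set f : ℝ → ℝ := fun y => ‖g y - arcAvg g a b‖ ^ 2
  have hf : IntegrableOn f (Ioc a b) := by
    have hsq : Integrable (fun t => ‖g t - arcAvg g a b‖ ^ 2) μT :=
      (hg.sub (memLp_const _)).integrable_norm_pow two_ne_zero
    exact (AddCircle.intervalIntegrable_comp_coe hsq a b).1
  have hosc : (b - a) * meanOsc g a b = ∫ y in Ioc a b, f y := by
    rw [meanOsc, ← mul_assoc, mul_inv_cancel₀ (sub_pos.2 hab).ne', one_mul,
      intervalIntegral.integral_of_le hab.le]
  have hsub : S ∩ Ioc a b ⊆ {y | η ^ 2 ≤ f y} ∩ Ioc a b := fun y ⟨hyS, hy⟩ =>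
    ⟨pow_le_pow_left₀ hη (hS y hyS) 2, hy⟩
  have hmarkov := mul_meas_ge_le_integral_of_nonneg (ae_of_all _ fun y => sq_nonneg _) hf (η ^ 2)
  rw [measureReal_restrict_apply' measurableSet_Ioc] at hmarkov
  have hvol : volume.real (S ∩ Ioc a b) ≤ volume.real ({y | η ^ 2 ≤ f y} ∩ Ioc a b) :=
    measureReal_mono hsub (measure_ne_top_of_subset inter_subset_right (by simp))
  refine le_of_mul_le_mul_left ?_ (sub_pos.2 hab)
  calc (b - a) * (θ * η ^ 2) = η ^ 2 * (θ * (b - a)) := by ring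
    _ ≤ η ^ 2 * volume.real ({y | η ^ 2 ≤ f y} ∩ Ioc a b) := by gcongr; exact hdens.trans hvol
    _ ≤ (b - a) * meanOsc g a b := hosc ▸ hmarkov

lemma le_abs_re_arcAvg_sub (hg : MemLp g 2 μT) {c ε : ℝ} (hgap : ∀ᵐ x : ℝ, ε ≤ |(g x).re - c|)
    {a b : ℝ} (hab : a < b) (hosc : meanOsc g a b < ε ^ 2 / 4) :
    ε / 2 ≤ |(arcAvg g a b).re - c| := by
  by_contra! hclose
  have hε : 0 ≤ ε := by linarith [abs_nonneg ((arcAvg g a b).re - c)]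
  have hfar : ∀ y ∈ {x : ℝ | ε ≤ |(g x).re - c|}, ε / 2 ≤ ‖g y - arcAvg g a b‖ := by
    intro y hy
    have hre := Complex.abs_re_sub_re_le_norm_sub (g y) (arcAvg g a b)
    have := abs_sub_le (g y).re (arcAvg g a b).re c
    linarith [hy.out]
  have hfull : 1 * (b - a) ≤ volume.real ({x : ℝ | ε ≤ |(g x).re - c|} ∩ Ioc a b) := by
    rw [measureReal_def, inter_comm, measure_inter_conull hgap, Real.volume_Ioc,
      ENNReal.toReal_ofReal (sub_pos.2 hab).le, one_mul]
  have := mul_sq_le_meanOsc hg hab hfar (by positivity) hfull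
  linarith

end Oscillation

section EssRange

variable {g : 𝕋c → ℂ}

lemma essRange_eq_support (hm : AEStronglyMeasurable g μT) (hre : RealValued g) :
    essRange g = (μT.map fun t => (g t).re).support := by
  ext x
  rw [Metric.nhds_basis_ball.mem_measureSupport]
  refine forall₂_congr fun ε _ => ?_
  rw [Measure.map_apply_of_aemeasurable hm.aemeasurable_re measurableSet_ball]
  refine iff_of_eq (congrArg _ (measure_congr ?_))
  filter_upwards [hre] with t ht
  change (‖g t - x‖ < ε) = (dist (g t).re x < ε)
  rw [Complex.norm_sub_ofReal_of_im_eq_zero ht, Real.dist_eq]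

lemma essRange_nonempty (hm : AEStronglyMeasurable g μT) (hre : RealValued g) :
    (essRange g).Nonempty := by
  rw [essRange_eq_support hm hre]
  refine Measure.nonempty_support ?_
  rw [Ne, Measure.map_eq_zero_iff hm.aemeasurable_re]
  exact IsProbabilityMeasure.ne_zero _

lemma volume_abs_re_sub_lt_pos (hm : AEStronglyMeasurable g μT) {l : ℝ} (hl : l ∈ essRange g)
    {η : ℝ} (hη : 0 < η) : 0 < volume {x : ℝ | |(g x).re - l| < η} := by
  have hS : NullMeasurableSet {t : 𝕋c | ‖g t - l‖ < η} μT :=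
    nullMeasurableSet_lt (hm.aemeasurable.sub_const _).norm aemeasurable_const
  refine (AddCircle.volume_coe_preimage_pos hS (hl η hη)).trans_le (measure_mono fun x hx => ?_)
  simpa using (Complex.abs_re_sub_re_le_norm_sub (g x) l).trans_lt hx

lemma ae_le_abs_re_sub_of_notMem_essRange (hre : RealValued g) {c : ℝ} (hc : c ∉ essRange g) :
    ∃ ε₀ > 0, ∀ ε ≤ ε₀, ∀ᵐ x : ℝ, ε ≤ |(g x).re - c| := by
  simp only [essRange, mem_ofPred_eq, not_forall, not_lt, nonpos_iff_eq_zero] at hc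
  obtain ⟨ε₀, hε₀, hnull⟩ := hc
  refine ⟨ε₀, hε₀, fun ε hε =>
    AddCircle.ae_coe_of_ae (P := fun t => ε ≤ |(g t).re - c|) ?_⟩
  filter_upwards [hre, measure_eq_zero_iff_ae_notMem.1 hnull] with t ht hfar
  rw [← Complex.norm_sub_ofReal_of_im_eq_zero ht]
  exact hε.trans (not_lt.1 hfar)

end EssRange

section Gap

variable {g : 𝕋c → ℂ}

lemma exists_meanOsc_ge_of_gap (hg : MemLp g 2 μT) {c ε δ : ℝ} (hε : 0 < ε) (hδ : 0 < δ)
    (hgap : ∀ᵐ x : ℝ, ε ≤ |(g x).re - c|)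
    (hlow : 0 < volume {x : ℝ | (g x).re ≤ c - ε})
    (hhigh : 0 < volume {x : ℝ | c + ε ≤ (g x).re}) :
    ∃ a b, a < b ∧ b - a < δ ∧ ε ^ 2 / 8 ≤ meanOsc g a b := by
  by_contra! hsmall
  obtain ⟨xl, hxl⟩ :=
    Real.exists_eventually_mul_le_measureReal_inter_Ioc hlow (θ := 3 / 4) (by norm_num)
  obtain ⟨xh, hxh⟩ :=
    Real.exists_eventually_mul_le_measureReal_inter_Ioc hhigh (θ := 3 / 4) (by norm_num)
  obtain ⟨r, (hr : 0 < r), hrδ, hl, hh⟩ := (eventually_mem_nhdsWithin.and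
    (((eventually_lt_nhds (half_pos hδ)).filter_mono nhdsWithin_le_nhds).and
      (hxl.and hxh))).exists
  have hosc (s : ℝ) : meanOsc g (s - r) (s + r) < ε ^ 2 / 8 :=
    hsmall _ _ (by linarith) (by linarith)
  have hne (s : ℝ) : (arcAvg g (s - r) (s + r)).re ≠ c := fun hs => by
    have := le_abs_re_arcAvg_sub hg hgap (by linarith) ((hosc s).trans (by nlinarith))
    rw [hs, sub_self, abs_zero] at this
    linarith
  have hdense (S : Set ℝ) (x : ℝ) (hS : ∀ y ∈ S, ε ≤ ‖g y - arcAvg g (x - r) (x + r)‖)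
      (hdens : 3 / 4 * (2 * r) ≤ volume.real (S ∩ Ioc (x - r) (x + r))) : False := by
    have := mul_sq_le_meanOsc hg (by linarith) hS hε.le (by convert hdens using 2; ring)
    nlinarith [hosc x]
  rcases (Complex.continuous_re.comp (continuous_arcAvg_sub_add (hg.integrable one_le_two) r)
    ).forall_lt_or_forall_gt_of_forall_ne hne with hbelow | habove
  · refine hdense _ xh (fun y (hy : c + ε ≤ (g y).re) => ?_) hh
    have hav : (arcAvg g (xh - r) (xh + r)).re < c := hbelow xh
    have := (le_abs_self _).trans
      (Complex.abs_re_sub_re_le_norm_sub (g y) (arcAvg g (xh - r) (xh + r)))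
    linarith
  · refine hdense _ xl (fun y (hy : (g y).re ≤ c - ε) => ?_) hl
    have hav : c < (arcAvg g (xl - r) (xl + r)).re := habove xl
    have := (neg_le_abs _).trans
      (Complex.abs_re_sub_re_le_norm_sub (g y) (arcAvg g (xl - r) (xl + r)))
    linarith

lemma mem_essRange_of_lt_of_lt (hg : MemVMOR g) {l₁ l₂ c : ℝ} (h₁ : l₁ ∈ essRange g)
    (h₂ : l₂ ∈ essRange g) (hl₁ : l₁ < c) (hl₂ : c < l₂) : c ∈ essRange g := by
  obtain ⟨⟨hL2, -, hvmo⟩, hre⟩ := hg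
  by_contra hc
  obtain ⟨ε₀, hε₀, hgap⟩ := ae_le_abs_re_sub_of_notMem_essRange hre hc
  set ε := min ε₀ (min ((c - l₁) / 2) ((l₂ - c) / 2))
  have hε : 0 < ε := lt_min hε₀ (lt_min (by linarith) (by linarith))
  have hε₁ : ε ≤ (c - l₁) / 2 := (min_le_right _ _).trans (min_le_left _ _)
  have hε₂ : ε ≤ (l₂ - c) / 2 := (min_le_right _ _).trans (min_le_right _ _)
  have hlow : 0 < volume {x : ℝ | (g x).re ≤ c - ε} :=
    (volume_abs_re_sub_lt_pos hL2.1 h₁ (by linarith : 0 < c - ε - l₁)).trans_le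
      (measure_mono fun x (hx : |(g x).re - l₁| < c - ε - l₁) =>
        show (g x).re ≤ c - ε by linarith [(abs_lt.1 hx).2])
  have hhigh : 0 < volume {x : ℝ | c + ε ≤ (g x).re} :=
    (volume_abs_re_sub_lt_pos hL2.1 h₂ (by linarith : 0 < l₂ - c - ε)).trans_le
      (measure_mono fun x (hx : |(g x).re - l₂| < l₂ - c - ε) =>
        show c + ε ≤ (g x).re by linarith [(abs_lt.1 hx).1])
  obtain ⟨δ, hδ, hosc⟩ := hvmo (ε ^ 2 / 8) (by positivity)
  obtain ⟨a, b, hab, hba, hge⟩ :=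
    exists_meanOsc_ge_of_gap hL2 hε hδ (hgap ε (min_le_left _ _)) hlow hhigh
  exact (hosc a b hab hba).not_ge hge

end Gap

/-- If `g ∈ VMO_ℝ` then the essential range of `g` is a connected
subset of `ℝ`. -/
theorem statement11 (g : 𝕋c → ℂ) (hg : MemVMOR g) : IsConnected (essRange g) :=
  ⟨essRange_nonempty hg.1.1.1 hg.2, (ordConnected_of_Ioo fun _ h₁ _ h₂ _ _ hc =>
    mem_essRange_of_lt_of_lt hg h₁ h₂ hc.1 hc.2).isPreconnected⟩
end
end

section
/- If f ∈ VMO_ℝ and f is integer valued (f(e^{it}) ∈ ℤ for almost every e^{it} ∈ 𝕋), then f is constant almost everywhere on 𝕋. -/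
open MeasureTheory Complex Real Set

noncomputable section

/-!
On an arc of length `ℓ` with mean oscillation `< ε`, Chebyshev's inequality shows that an
integer-valued `f` equals the integer nearest to its mean outside a set of measure `≤ 4εℓ`.
When `ε < 1/16`, two arcs overlapping in half their length must carry the same integer, so
chaining short arcs once around the circle, `f` equals one value off a set of measure `O(ε)`.
That value cannot depend on `ε`, and letting `ε → 0` shows that `f` is a.e. constant.
-/

open Filter Topology

theorem half_le_norm_intCast_sub_of_ne_round {c : ℂ} {j : ℤ} (hj : j ≠ round c.re) :
    1 / 2 ≤ ‖(j : ℂ) - c‖ := by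
  have h_one : (1 : ℝ) ≤ |(j : ℝ) - round c.re| := by
    exact_mod_cast Int.one_le_abs (sub_ne_zero.mpr hj)
  have h_re : |(j : ℝ) - c.re| ≤ ‖(j : ℂ) - c‖ := by
    simpa using Complex.abs_re_le_norm ((j : ℂ) - c)
  linarith [abs_sub_le (j : ℝ) c.re (round c.re), abs_sub_round c.re]

section DominantValue

variable {α β : Type*} [MeasurableSpace α] {μ : Measure α}

theorem eq_of_measure_setOf_ne_inter_add_lt {F : α → β} {s : Set α} {k j : β}
    (h : μ ({x | F x ≠ k} ∩ s) + μ ({x | F x ≠ j} ∩ s) < μ s) : k = j := by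
  by_contra hkj
  have hcover : s ⊆ ({x | F x ≠ k} ∩ s) ∪ ({x | F x ≠ j} ∩ s) := by
    intro x hx
    by_cases hxk : F x = k
    · exact Or.inr ⟨fun hxj => hkj (hxk.symm.trans hxj), hx⟩
    · exact Or.inl ⟨hxk, hx⟩
  exact (measure_mono hcover |>.trans (measure_union_le _ _)).not_gt h

theorem measure_setOf_ne_round_le {g : α → ℂ} (hg : ∀ᵐ x ∂μ, ∃ k : ℤ, g x = k) (c : ℂ)
    (hi : Integrable (fun x => ‖g x - c‖ ^ 2) μ) :
    μ {x | g x ≠ (round c.re : ℤ)} ≤ ENNReal.ofReal (4 * ∫ x, ‖g x - c‖ ^ 2 ∂μ) := by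
  have hi4 : Integrable (fun x => 4 * ‖g x - c‖ ^ 2) μ := hi.const_mul 4
  have h_sub : {x | g x ≠ (round c.re : ℤ)} ≤ᵐ[μ]
      {x | 1 ≤ ENNReal.ofReal (4 * ‖g x - c‖ ^ 2)} := by
    filter_upwards [hg] with x ⟨j, hj⟩ hne
    have hj_ne : j ≠ round c.re := fun h => hne (by rw [hj, h])
    have := half_le_norm_intCast_sub_of_ne_round hj_ne
    rw [← hj] at this
    exact ENNReal.one_le_ofReal.mpr (by nlinarith)
  calc μ {x | g x ≠ (round c.re : ℤ)}
      ≤ μ {x | 1 ≤ ENNReal.ofReal (4 * ‖g x - c‖ ^ 2)} := measure_mono_ae h_sub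
    _ ≤ ∫⁻ x, ENNReal.ofReal (4 * ‖g x - c‖ ^ 2) ∂μ := by
      simpa using mul_meas_ge_le_lintegral₀ hi4.aemeasurable.ennreal_ofReal 1
    _ = ENNReal.ofReal (4 * ∫ x, ‖g x - c‖ ^ 2 ∂μ) := by
      rw [← integral_const_mul, ofReal_integral_eq_lintegral_ofReal hi4
        (ae_of_all _ fun x => by positivity)]

/-- Consecutive intervals overlap in length `h > 2η`, so they carry the same value. -/
theorem exists_volume_setOf_ne_inter_Ioc_zero_mul_le {F : ℝ → β} {h η : ℝ} (hh : 0 < h)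
    (hη : 2 * η < h)
    (hloc : ∀ a, ∃ k, volume ({t | F t ≠ k} ∩ Ioc a (a + 2 * h)) ≤ ENNReal.ofReal η) :
    ∃ k, ∀ n : ℕ, volume ({t | F t ≠ k} ∩ Ioc 0 (n * h)) ≤ n * ENNReal.ofReal η := by
  choose k hk using hloc
  have hstep : ∀ a, k (a + h) = k a := by
    intro a
    refine (eq_of_measure_setOf_ne_inter_add_lt (μ := volume) (F := F)
      (s := Ioc (a + h) (a + 2 * h)) ?_).symm
    have hleft : Ioc (a + h) (a + 2 * h) ⊆ Ioc a (a + 2 * h) := Ioc_subset_Ioc_left (by linarith)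
    have hright : Ioc (a + h) (a + 2 * h) ⊆ Ioc (a + h) (a + h + 2 * h) :=
      Ioc_subset_Ioc_right (by linarith)
    calc _ ≤ ENNReal.ofReal η + ENNReal.ofReal η :=
          add_le_add ((measure_mono (inter_subset_inter_right _ hleft)).trans (hk a))
            ((measure_mono (inter_subset_inter_right _ hright)).trans (hk (a + h)))
      _ = 2 * ENNReal.ofReal η := (two_mul _).symm
      _ < ENNReal.ofReal h := by
          rw [← ENNReal.ofReal_ofNat 2, ← ENNReal.ofReal_mul zero_le_two,
            ENNReal.ofReal_lt_ofReal_iff hh]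
          exact hη
      _ = volume (Ioc (a + h) (a + 2 * h)) := by rw [Real.volume_Ioc]; ring_nf
  have hgrid : ∀ n : ℕ, k (n * h) = k 0 := by
    intro n
    induction n with
    | zero => simp
    | succ n ih => rw [Nat.cast_succ, add_one_mul, hstep, ih]
  refine ⟨k 0, fun n => ?_⟩
  induction n with
  | zero => simp
  | succ n ih =>
    have hsplit : Ioc 0 ((n + 1 : ℕ) * h) = Ioc 0 (n * h) ∪ Ioc (n * h) (n * h + h) := by
      rw [Ioc_union_Ioc_eq_Ioc (by positivity) (by linarith)]
      push_cast; ring_nf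
    have hlast : Ioc (n * h) (n * h + h) ⊆ Ioc (n * h) (n * h + 2 * h) :=
      Ioc_subset_Ioc_right (by linarith)
    calc volume ({t | F t ≠ k 0} ∩ Ioc 0 ((n + 1 : ℕ) * h))
        ≤ volume ({t | F t ≠ k 0} ∩ Ioc 0 (n * h))
          + volume ({t | F t ≠ k (n * h)} ∩ Ioc (n * h) (n * h + 2 * h)) := by
          rw [hsplit, inter_union_distrib_left, hgrid]
          exact (measure_union_le _ _).trans
            (add_le_add_right (measure_mono (inter_subset_inter_right _ hlast)) _)
      _ ≤ n * ENNReal.ofReal η + ENNReal.ofReal η := add_le_add ih (hk _)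
      _ = (n + 1 : ℕ) * ENNReal.ofReal η := by push_cast; ring

end DominantValue

namespace AddCircle

variable {T : ℝ} [Fact (0 < T)]

theorem ae_haarAddCircle_eq_ae_volume :
    ae (haarAddCircle : Measure (AddCircle T)) = ae volume := by
  rw [volume_eq_smul_haarAddCircle,
    Measure.ae_ennreal_smul_measure_eq (ENNReal.ofReal_pos.mpr Fact.out).ne']

theorem ae_coe_of_ae_haarAddCircle {p : AddCircle T → Prop} (h : ∀ᵐ x ∂haarAddCircle, p x) :
    ∀ᵐ t : ℝ, p t := by
  rw [ae_haarAddCircle_eq_ae_volume] at h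
  rw [← Measure.restrict_univ (μ := volume), ← iUnion_Ioc_zsmul (Fact.out : 0 < T),
    ae_restrict_iUnion_iff]
  intro n
  have := (AddCircle.measurePreserving_mk T (n • T)).quasiMeasurePreserving.ae h
  rwa [add_zsmul, one_zsmul]

theorem ae_haarAddCircle_of_ae_restrict_Ioc {p : AddCircle T → Prop} (a : ℝ)
    (h : ∀ᵐ t : ℝ ∂volume.restrict (Ioc a (a + T)), p t) : ∀ᵐ x ∂haarAddCircle, p x := by
  rw [ae_restrict_iff_subtype measurableSet_Ioc, ← (measurePreserving_equivIoc T).map_eq] at h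
  rw [ae_haarAddCircle_eq_ae_volume]
  exact ((measurableEquivIoc T a).measurableEmbedding.ae_map_iff.mp h).mono fun x hx => by
    rwa [← coe_equivIoc (a := a) (y := x)]

theorem memLp_comp_coe_restrict_Ioc {f : AddCircle T → ℂ} {p : ENNReal}
    (hf : MemLp f p haarAddCircle) (a : ℝ) :
    MemLp (fun t : ℝ => f t) p (volume.restrict (Ioc a (a + T))) :=
  hf.of_haarAddCircle.comp_measurePreserving (AddCircle.measurePreserving_mk T a)

end AddCircle

theorem setIntegral_norm_sub_arcAvg_sq {f : 𝕋c → ℂ} {a b : ℝ} (hab : a < b) :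
    ∫ t in Ioc a b, ‖f t - arcAvg f a b‖ ^ 2 = (b - a) * meanOsc f a b := by
  rw [meanOsc, ← mul_assoc, mul_inv_cancel₀ (sub_pos.2 hab).ne', one_mul,
    intervalIntegral.integral_of_le hab.le]

theorem exists_int_volume_setOf_ne_inter_Ioc_le_meanOsc {f : 𝕋c → ℂ}
    (hint : ∀ᵐ t : ℝ, ∃ k : ℤ, f t = k) {a b : ℝ} (hab : a < b)
    (hL2 : MemLp (fun t : ℝ => f t) 2 (volume.restrict (Ioc a b))) :
    ∃ k : ℤ, volume ({t : ℝ | f t ≠ k} ∩ Ioc a b) ≤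
      ENNReal.ofReal (4 * ((b - a) * meanOsc f a b)) := by
  refine ⟨round (arcAvg f a b).re, ?_⟩
  rw [← Measure.restrict_apply' measurableSet_Ioc, ← setIntegral_norm_sub_arcAvg_sq hab]
  exact measure_setOf_ne_round_le (ae_restrict_of_ae hint) _
    ((hL2.sub (memLp_const _)).integrable_norm_pow two_ne_zero)

theorem MemVMO.exists_volume_setOf_ne_inter_Ioc_le {f : 𝕋c → ℂ} (hf : MemVMO f)
    (hint : ∀ᵐ t : ℝ, ∃ k : ℤ, f t = k) {ε : ℝ} (hε : 0 < ε) (hε' : ε < 1 / 16) :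
    ∃ c : ℂ, volume ({t : ℝ | f t ≠ c} ∩ Ioc 0 (2 * π)) ≤ ENNReal.ofReal (16 * π * ε) := by
  obtain ⟨δ, hδ, hosc⟩ := hf.2.2 ε hε
  obtain ⟨N, hN⟩ := exists_nat_gt (max 2 (4 * π / δ))
  have hN2 : (2 : ℝ) < N := (le_max_left _ _).trans_lt hN
  have hNδ : 4 * π / δ < N := (le_max_right _ _).trans_lt hN
  set h := 2 * π / N with h_def
  have hh : 0 < h := by positivity
  have hNh : N * h = 2 * π := by rw [h_def]; field_simp
  have h2h : 2 * h ≤ 2 * π := by nlinarith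
  have h2hδ : 2 * h < δ := by
    rw [div_lt_iff₀ hδ] at hNδ
    nlinarith
  have hloc : ∀ a : ℝ, ∃ c : ℂ,
      volume ({t : ℝ | f t ≠ c} ∩ Ioc a (a + 2 * h)) ≤ ENNReal.ofReal (8 * h * ε) := by
    intro a
    have hL2 := (AddCircle.memLp_comp_coe_restrict_Ioc hf.1 a).mono_measure
      (Measure.restrict_mono (Ioc_subset_Ioc_right (by linarith : a + 2 * h ≤ a + 2 * π)) le_rfl)
    obtain ⟨k, hk⟩ := exists_int_volume_setOf_ne_inter_Ioc_le_meanOsc hint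
      (by linarith : a < a + 2 * h) hL2
    refine ⟨(k : ℂ), hk.trans (ENNReal.ofReal_le_ofReal ?_)⟩
    have := hosc a (a + 2 * h) (by linarith) (by linarith)
    rw [add_sub_cancel_left]
    nlinarith
  obtain ⟨c, hc⟩ := exists_volume_setOf_ne_inter_Ioc_zero_mul_le (η := 8 * h * ε) hh
    (by nlinarith [mul_lt_mul_of_pos_left hε' hh]) hloc
  refine ⟨c, ?_⟩
  have := hc N
  rwa [hNh, ← ENNReal.ofReal_natCast, ← ENNReal.ofReal_mul (by positivity),
    show (N : ℝ) * (8 * h * ε) = 16 * π * ε by linear_combination 8 * ε * hNh] at this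

theorem MemVMO.exists_volume_setOf_ne_inter_Ioc_eq_zero {f : 𝕋c → ℂ} (hf : MemVMO f)
    (hint : ∀ᵐ t : ℝ, ∃ k : ℤ, f t = k) :
    ∃ c : ℂ, volume ({t : ℝ | f t ≠ c} ∩ Ioc 0 (2 * π)) = 0 := by
  obtain ⟨c₀, hc₀⟩ := hf.exists_volume_setOf_ne_inter_Ioc_le hint
    (ε := 1 / 32) (by norm_num) (by norm_num)
  have hsmall : ∀ ε, 0 < ε → ε < 1 / 16 →
      volume ({t : ℝ | f t ≠ c₀} ∩ Ioc 0 (2 * π)) ≤ ENNReal.ofReal (16 * π * ε) := by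
    intro ε hε hε'
    obtain ⟨c, hc⟩ := hf.exists_volume_setOf_ne_inter_Ioc_le hint hε hε'
    obtain rfl : c = c₀ :=
      eq_of_measure_setOf_ne_inter_add_lt <| (add_le_add hc hc₀).trans_lt <| by
        rw [← ENNReal.ofReal_add (by positivity) (by positivity), Real.volume_Ioc, sub_zero,
          ENNReal.ofReal_lt_ofReal_iff (by positivity)]
        nlinarith [pi_pos]
    exact hc
  have hlim : Tendsto (fun ε : ℝ => ENNReal.ofReal (16 * π * ε)) (𝓝[>] 0) (𝓝 0) := by
    have : Continuous fun ε : ℝ => ENNReal.ofReal (16 * π * ε) :=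
      ENNReal.continuous_ofReal.comp (continuous_const_mul _)
    simpa using (this.tendsto 0).mono_left nhdsWithin_le_nhds
  refine ⟨c₀, nonpos_iff_eq_zero.mp <| ge_of_tendsto hlim ?_⟩
  filter_upwards [Ioo_mem_nhdsGT (by norm_num : (0 : ℝ) < 1 / 16)] with ε hε
    using hsmall ε hε.1 hε.2

/-- If `f ∈ VMO_ℝ` is integer valued (a.e.), then `f` is constant
almost everywhere on `𝕋`. -/
theorem statement12 (f : 𝕋c → ℂ) (hf : MemVMOR f)
    (hint : ∀ᵐ t ∂μT, ∃ k : ℤ, f t = (k : ℂ)) :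
    ∃ c : ℂ, f =ᵐ[μT] fun _ => c := by
  obtain ⟨c, hc⟩ := hf.1.exists_volume_setOf_ne_inter_Ioc_eq_zero
    (AddCircle.ae_coe_of_ae_haarAddCircle hint)
  refine ⟨c, AddCircle.ae_haarAddCircle_of_ae_restrict_Ioc 0 ?_⟩
  rwa [ae_iff, Measure.restrict_apply' measurableSet_Ioc, zero_add]
end
end
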